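/- (Open subsets of Euclidean space are essential length spaces.) Let m ≥ 1, let U ⊆ ℝ^m be open, let γ : [0,1] → U be a Lipschitz curve, let N ⊆ ℝ^m be a set of Lebesgue measure zero, and let ε > 0. Then there exists a Lipschitz curve σ : [0,1] → U with σ(0) = γ(0), σ(1) = γ(1), such that σ^{-1}(N) ⊆ [0,1] has one-dimensional Lebesgue measure zero and L(σ) ≤ L(γ) + ε. -/

import Mathlib

open MeasureTheory Set

/-!
Perturb `γ` to `σ t = γ t + tent t • v`, where `tent` is a Lipschitz bump vanishing only at the
endpoints of `[0, 1]` and `v` is a small vector. For fixed `t ∈ (0, 1)` the set of `v` with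
`σ t ∈ N` is a homothetic copy of `N`, hence null, so by Fubini almost every `v` makes
`σ⁻¹' N` null. A small `v` keeps `σ` in a tube around `γ` contained in `U`, and costs at most
`‖v‖` of length.
-/

theorem eVariationOn_add_le {α E : Type*} [LinearOrder α] [SeminormedAddCommGroup E]
    (f g : α → E) (s : Set α) :
    eVariationOn (fun t => f t + g t) s ≤ eVariationOn f s + eVariationOn g s := by
  refine iSup_le fun ⟨n, u, hu, us⟩ => ?_
  calc ∑ i ∈ Finset.range n, edist (f (u (i + 1)) + g (u (i + 1))) (f (u i) + g (u i))
      ≤ ∑ i ∈ Finset.range n,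
          (edist (f (u (i + 1))) (f (u i)) + edist (g (u (i + 1))) (g (u i))) :=
        Finset.sum_le_sum fun i _ => edist_add_add_le _ _ _ _
    _ ≤ eVariationOn f s + eVariationOn g s := by
        rw [Finset.sum_add_distrib]
        exact add_le_add (eVariationOn.sum_le (f := f) hu us) (eVariationOn.sum_le (f := g) hu us)

theorem LipschitzOnWith.eVariationOn_Icc_le {E : Type*} [PseudoEMetricSpace E] {f : ℝ → E}
    {C : NNReal} {a b : ℝ} (hf : LipschitzOnWith C f (Icc a b)) :
    eVariationOn f (Icc a b) ≤ C * ENNReal.ofReal (b - a) := by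
  simpa using hf.comp_eVariationOn_le (g := id) (mapsTo_id _)

def tent (t : ℝ) : ℝ := min t (1 - t)

@[simp] theorem tent_zero : tent 0 = 0 := by simp [tent]

@[simp] theorem tent_one : tent 1 = 0 := by simp [tent]

theorem tent_ne_zero {t : ℝ} (ht : t ∈ Ioo 0 1) : tent t ≠ 0 :=
  (lt_min ht.1 (sub_pos.2 ht.2)).ne'

theorem norm_tent_smul_le {E : Type*} [NormedAddCommGroup E] [NormedSpace ℝ E] {t : ℝ}
    (ht : t ∈ Icc 0 1) (v : E) : ‖tent t • v‖ ≤ ‖v‖ := by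
  have htent : |tent t| ≤ 1 := by
    rw [abs_of_nonneg (show 0 ≤ tent t from le_min ht.1 (sub_nonneg.2 ht.2))]
    exact (min_le_left _ _).trans ht.2
  simpa [norm_smul] using mul_le_of_le_one_left (norm_nonneg v) htent

theorem lipschitzWith_tent : LipschitzWith 1 tent := by
  unfold tent
  simpa using LipschitzWith.id.min ((LipschitzWith.const 1).sub LipschitzWith.id)

theorem lipschitzWith_tent_smul {E : Type*} [NormedAddCommGroup E] [NormedSpace ℝ E] (v : E) :
    LipschitzWith ‖v‖₊ (fun t => tent t • v) := by
  simpa [Function.comp_def] using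
    (ContinuousLinearMap.toSpanSingleton ℝ v).lipschitz.comp lipschitzWith_tent

theorem eVariationOn_add_tent_smul_le {E : Type*} [NormedAddCommGroup E] [NormedSpace ℝ E]
    (γ : ℝ → E) (v : E) :
    eVariationOn (fun t => γ t + tent t • v) (Icc 0 1) ≤ eVariationOn γ (Icc 0 1) + ‖v‖ₑ := by
  calc eVariationOn (fun t => γ t + tent t • v) (Icc 0 1)
      ≤ eVariationOn γ (Icc 0 1) + eVariationOn (fun t => tent t • v) (Icc 0 1) :=
        eVariationOn_add_le _ _ _
    _ ≤ eVariationOn γ (Icc 0 1) + ‖v‖ₑ := by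
        gcongr
        simpa [enorm_eq_nnnorm] using
          (lipschitzWith_tent_smul v).lipschitzOnWith.eVariationOn_Icc_le (a := 0) (b := 1)

theorem ae_measure_setOf_add_smul_mem_eq_zero {α : Type*} [MeasurableSpace α] (ν : Measure α)
    [SFinite ν] {E : Type*} [NormedAddCommGroup E] [NormedSpace ℝ E] [MeasurableSpace E]
    [BorelSpace E] [FiniteDimensional ℝ E] (μ : Measure E) [μ.IsAddHaarMeasure]
    {γ : α → E} {φ : α → ℝ} (hγ : Measurable γ) (hφ : Measurable φ) {N : Set E} (hN : μ N = 0) :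
    ∀ᵐ v ∂μ, ν {t | φ t ≠ 0 ∧ γ t + φ t • v ∈ N} = 0 := by
  obtain ⟨N', hNN', hN'_meas, hN'⟩ := exists_measurable_superset_of_null hN
  set S : Set (E × α) := {p | φ p.2 ≠ 0 ∧ γ p.2 + φ p.2 • p.1 ∈ N'}
  have hS_meas : MeasurableSet S :=
    ((measurableSet_singleton 0).compl.preimage (hφ.comp measurable_snd)).inter
      (((hγ.comp measurable_snd).add ((hφ.comp measurable_snd).smul measurable_fst)) hN'_meas)
  have hslice : ∀ t, μ ((fun v => (v, t)) ⁻¹' S) = 0 := by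
    intro t
    by_cases ht : φ t = 0
    · simp [S, ht]
    · have : (fun v => (v, t)) ⁻¹' S = (fun v => φ t • v) ⁻¹' ((fun w => γ t + w) ⁻¹' N') := by
        ext v
        simp [S, ht]
      rw [this, Measure.addHaar_preimage_smul μ ht, measure_preimage_add, hN', mul_zero]
  have hS : μ.prod ν S = 0 := by simp [Measure.prod_apply_symm hS_meas, hslice]
  filter_upwards [Measure.measure_ae_null_of_prod_null hS] with v hv
  refine measure_mono_null (fun t ht => ?_) hv
  exact ⟨ht.1, hNN' ht.2⟩

theorem open_subset_euclidean_essential_length_space_general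
    (m : ℕ) (U : Set (EuclideanSpace ℝ (Fin m))) (hU : IsOpen U)
    (γ : ℝ → EuclideanSpace ℝ (Fin m)) (K : NNReal)
    (hγ : LipschitzOnWith K γ (Icc 0 1)) (hγU : ∀ t ∈ Icc (0 : ℝ) 1, γ t ∈ U)
    (N : Set (EuclideanSpace ℝ (Fin m))) (hN : volume N = 0)
    (ε : ℝ) (hε : 0 < ε) :
    ∃ σ : ℝ → EuclideanSpace ℝ (Fin m),
      (∃ K' : NNReal, LipschitzOnWith K' σ (Icc 0 1)) ∧
      (∀ t ∈ Icc (0 : ℝ) 1, σ t ∈ U) ∧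
      σ 0 = γ 0 ∧ σ 1 = γ 1 ∧
      volume (σ ⁻¹' N ∩ Icc 0 1) = 0 ∧
      eVariationOn σ (Icc 0 1) ≤ eVariationOn γ (Icc 0 1) + ENNReal.ofReal ε := by
  obtain ⟨δ, hδ, hδU⟩ := (isCompact_Icc.image_of_continuousOn hγ.continuousOn)
    |>.exists_thickening_subset_open hU (image_subset_iff.2 hγU)
  set γ' := IccExtend zero_le_one ((Icc (0 : ℝ) 1).domRestrict γ)
  have hγ' : EqOn γ' γ (Icc 0 1) := fun t ht => IccExtend_of_mem _ _ ht
  have hγ'_meas : Measurable γ' :=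
    (continuousOn_iff_continuous_domRestrict.1 hγ.continuousOn).Icc_extend'.measurable
  obtain ⟨v, hvN, hv⟩ : ∃ v ∈ {v | volume {t | tent t ≠ 0 ∧ γ' t + tent t • v ∈ N} = 0},
      v ∈ Metric.ball 0 (min δ ε) :=
    (Measure.dense_of_ae (ae_measure_setOf_add_smul_mem_eq_zero volume volume hγ'_meas
      lipschitzWith_tent.continuous.measurable hN)).exists_mem_open
      Metric.isOpen_ball (Metric.nonempty_ball.2 (lt_min hδ hε))
  rw [mem_ball_zero_iff, lt_min_iff] at hv
  refine ⟨fun t => γ t + tent t • v, ⟨_, hγ.add (lipschitzWith_tent_smul v).lipschitzOnWith⟩,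
    fun t ht => hδU ?_, by simp, by simp, ?_, ?_⟩
  · exact Metric.mem_thickening_iff.2 ⟨γ t, mem_image_of_mem γ ht,
      by simpa using (norm_tent_smul_le ht v).trans_lt hv.1⟩
  · refine measure_mono_null (fun t ⟨htN, ht⟩ => ?_)
      (measure_union_null hvN ((toFinite {(0 : ℝ), 1}).measure_zero volume))
    by_cases htI : t ∈ Ioo 0 1
    · exact Or.inl ⟨tent_ne_zero htI, by rw [hγ' ht]; exact htN⟩
    · exact Or.inr ((Icc_sdiff_Ioo_same zero_le_one).subset ⟨ht, htI⟩)
  · refine (eVariationOn_add_tent_smul_le γ v).trans ?_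
    rw [← ofReal_norm]
    gcongr
    exact hv.2.le

/-- Open subsets of Euclidean space are essential length spaces: any Lipschitz curve
in an open set `U` can be replaced, up to `ε` of length, by a Lipschitz curve in `U`
with the same endpoints spending zero time in a given Lebesgue-null set `N`. -/
theorem open_subset_euclidean_essential_length_space
    (m : ℕ) (hm : 1 ≤ m) (U : Set (EuclideanSpace ℝ (Fin m))) (hU : IsOpen U)
    (γ : ℝ → EuclideanSpace ℝ (Fin m)) (K : NNReal)
    (hγ : LipschitzOnWith K γ (Icc 0 1)) (hγU : ∀ t ∈ Icc (0 : ℝ) 1, γ t ∈ U)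
    (N : Set (EuclideanSpace ℝ (Fin m))) (hN : volume N = 0)
    (ε : ℝ) (hε : 0 < ε) :
    ∃ σ : ℝ → EuclideanSpace ℝ (Fin m),
      (∃ K' : NNReal, LipschitzOnWith K' σ (Icc 0 1)) ∧
      (∀ t ∈ Icc (0 : ℝ) 1, σ t ∈ U) ∧
      σ 0 = γ 0 ∧ σ 1 = γ 1 ∧
      volume (σ ⁻¹' N ∩ Icc 0 1) = 0 ∧
      eVariationOn σ (Icc 0 1) ≤ eVariationOn γ (Icc 0 1) + ENNReal.ofReal ε :=
  open_subset_euclidean_essential_length_space_general m U hU γ K hγ hγU N hN ε hε
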